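/- Let 0 < s < 1, t, τ ≥ 0 and n ∈ ℤ. Then the series Σ_{k∈ℤ} L^s_{n−k}(t) L^s_k(τ) converges absolutely and Σ_{k∈ℤ} L^s_{n−k}(t) L^s_k(τ) = L^s_n(t+τ); that is, the kernels L^s satisfy the Chapman–Kolmogorov (semigroup) property. -/

import Mathlib

/-- The kernel `L^s_n(t)` of the semigroup generated by minus the discrete fractional
Laplacian on `ℤ` with mesh size `h = 1`. -/
noncomputable def Lker (s : ℝ) (n : ℤ) (t : ℝ) : ℝ :=
  (1 / (2 * Real.pi)) *
    ∫ θ in (-Real.pi)..Real.pi, Real.exp (-t * (4 * Real.sin (θ / 2) ^ 2) ^ s) * Real.cos (n * θ)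

/-!
`Lker s · t` is the sequence of Fourier coefficients of the continuous multiplier
`θ ↦ exp (-t ‖e^{iθ} - 1‖^{2s})` on the circle, and these multipliers satisfy
`m_t m_τ = m_{t+τ}`. By the polarised Parseval identity in `L²` of the circle, the Fourier
coefficients of a product of two continuous functions are the (convergent) convolution of their
coefficients, and here all the coefficients are real.
-/

open MeasureTheory Complex AddCircle
open scoped Real ComplexConjugate InnerProductSpace

section FourierConvolution

variable {T : ℝ} [Fact (0 < T)]

theorem fourierCoeff_star (f : AddCircle T → ℂ) (n : ℤ) :
    fourierCoeff (star f) n = conj (fourierCoeff f (-n)) := by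
  simp only [fourierCoeff, ← integral_conj, smul_eq_mul, map_mul, neg_neg, fourier_neg,
    Pi.star_apply, RCLike.star_def]

theorem fourierCoeff_mul_fourier (f : AddCircle T → ℂ) (m n : ℤ) :
    fourierCoeff (f * ⇑(fourier (T := T) m)) n = fourierCoeff f (n - m) := by
  simp only [fourierCoeff, smul_eq_mul, Pi.mul_apply, show -(n - m) = -n + m by ring, fourier_add]
  congr 1 with z
  ring

theorem hasSum_conj_fourierCoeff_mul_fourierCoeff (f g : Lp ℂ 2 (haarAddCircle (T := T))) :
    HasSum (fun i => conj (fourierCoeff f i) * fourierCoeff g i)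
      (∫ z, conj (f z) * g z ∂haarAddCircle) := by
  have hcoeff (i : ℤ) : ⟪f, fourierBasis i⟫_ℂ * ⟪fourierBasis i, g⟫_ℂ =
      conj (fourierCoeff f i) * fourierCoeff g i := by
    rw [← inner_conj_symm, ← fourierBasis.repr_apply_apply, ← fourierBasis.repr_apply_apply,
      fourierBasis_repr, fourierBasis_repr]
  have h := fourierBasis.hasSum_inner_mul_inner f g
  simp only [hcoeff] at h
  simpa only [L2.inner_def, RCLike.inner_apply'] using h

theorem hasSum_fourierCoeff_mul (f g : C(AddCircle T, ℂ)) (n : ℤ) :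
    HasSum (fun k => fourierCoeff f (n - k) * fourierCoeff g k) (fourierCoeff (f * g) n) := by
  have h := hasSum_conj_fourierCoeff_mul_fourierCoeff
    (ContinuousMap.toLp 2 haarAddCircle ℂ (star f * fourier n))
    (ContinuousMap.toLp 2 haarAddCircle ℂ g)
  simp only [fourierCoeff_toLp] at h
  convert h using 1
  · ext k
    rw [ContinuousMap.coe_mul, ContinuousMap.coe_star, fourierCoeff_mul_fourier,
      fourierCoeff_star, neg_sub, conj_conj]
  · refine integral_congr_ae ?_
    filter_upwards
      [ContinuousMap.coeFn_toLp (p := 2) (𝕜 := ℂ) (haarAddCircle (T := T)) (star f * fourier n),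
        ContinuousMap.coeFn_toLp (p := 2) (𝕜 := ℂ) (haarAddCircle (T := T)) g] with z hfz hgz
    simp only [hfz, hgz, ContinuousMap.mul_apply, ContinuousMap.star_apply, map_mul, conj_conj,
      RCLike.star_def, fourier_neg, smul_eq_mul]
    ring

end FourierConvolution

instance fact_two_pi_pos : Fact (0 < 2 * π) := ⟨Real.two_pi_pos⟩

theorem intervalIntegral_eq_zero_of_odd {g : ℝ → ℝ} (a : ℝ) (hg : ∀ x, g (-x) = -g x) :
    ∫ x in -a..a, g x = 0 := by
  have h := intervalIntegral.integral_comp_neg (a := -a) (b := a) g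
  simp only [hg, intervalIntegral.integral_neg, neg_neg] at h
  linarith

theorem fourierCoeff_eq_integral_mul_cos {f : AddCircle (2 * π) → ℂ} {E : ℝ → ℝ}
    (hf : ∀ θ : ℝ, f θ = E θ) (hE : ∀ θ, E (-θ) = E θ)
    (hint : IntervalIntegrable E volume (-π) π) (m : ℤ) :
    fourierCoeff f m = ((1 / (2 * π) * ∫ θ in (-π)..π, E θ * Real.cos (m * θ) : ℝ) : ℂ) := by
  have hintegrable {c : ℝ → ℝ} (hc : Continuous c) :
      IntervalIntegrable (fun θ => ((E θ * c θ : ℝ) : ℂ)) volume (-π) π :=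
    have h := hint.mul_continuousOn hc.continuousOn
    ⟨h.1.ofReal, h.2.ofReal⟩
  have hsplit (θ : ℝ) : fourier (-m) (θ : AddCircle (2 * π)) • f θ =
      ((E θ * Real.cos (m * θ) : ℝ) : ℂ) - ((E θ * Real.sin (m * θ) : ℝ) : ℂ) * I := by
    rw [fourier_coe_apply, hf, smul_eq_mul,
      show 2 * π * I * ((-m : ℤ) : ℂ) * θ / ((2 * π : ℝ) : ℂ) = ((-(m * θ) : ℝ) : ℂ) * I by
        push_cast; field_simp,
      exp_mul_I, ← ofReal_cos, ← ofReal_sin, Real.cos_neg, Real.sin_neg]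
    push_cast
    ring
  have hodd : ∫ θ in (-π)..π, E θ * Real.sin (m * θ) = 0 :=
    intervalIntegral_eq_zero_of_odd π fun θ => by rw [hE, mul_neg, Real.sin_neg, mul_neg]
  rw [fourierCoeff_eq_intervalIntegral f m (-π), show -π + 2 * π = π by ring,
    intervalIntegral.integral_congr fun θ _ => hsplit θ,
    intervalIntegral.integral_sub (hintegrable (by fun_prop))
      ((hintegrable (by fun_prop)).mul_const I),
    intervalIntegral.integral_mul_const, intervalIntegral.integral_ofReal,
    intervalIntegral.integral_ofReal, hodd, real_smul]
  push_cast
  ring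

/-- The symbol of `-Δ₁` is `‖e^{iθ} - 1‖² = 4 sin²(θ/2)`, so this is the symbol of
`e^{-t(-Δ₁)^s}`. -/
noncomputable def heatMultiplier (s t : ℝ) (z : AddCircle (2 * π)) : ℂ :=
  Real.exp (-t * (‖fourier 1 z - 1‖ ^ 2) ^ s)

theorem norm_fourier_one_sub_one_sq (θ : ℝ) :
    ‖fourier 1 (θ : AddCircle (2 * π)) - 1‖ ^ 2 = 4 * Real.sin (θ / 2) ^ 2 := by
  rw [fourier_coe_apply, show 2 * π * I * ((1 : ℤ) : ℂ) * θ / ((2 * π : ℝ) : ℂ) = I * θ by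
      push_cast; field_simp,
    norm_exp_I_mul_ofReal_sub_one, Real.norm_eq_abs, sq_abs]
  ring

theorem heatMultiplier_coe (s t θ : ℝ) :
    heatMultiplier s t θ = Real.exp (-t * (4 * Real.sin (θ / 2) ^ 2) ^ s) := by
  rw [heatMultiplier, norm_fourier_one_sub_one_sq]

theorem continuous_heatMultiplier (s t : ℝ) (hs : 0 ≤ s) : Continuous (heatMultiplier s t) :=
  continuous_ofReal.comp <| Real.continuous_exp.comp <| continuous_const.mul <|
    (by fun_prop : Continuous fun z : AddCircle (2 * π) => ‖fourier 1 z - 1‖ ^ 2).rpow_const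
      fun _ => Or.inr hs

theorem heatMultiplier_mul (s t τ : ℝ) :
    heatMultiplier s t * heatMultiplier s τ = heatMultiplier s (t + τ) := by
  ext z
  simp only [Pi.mul_apply, heatMultiplier, ← ofReal_mul, ← Real.exp_add]
  ring_nf

theorem fourierCoeff_heatMultiplier (s t : ℝ) (hs : 0 ≤ s) (m : ℤ) :
    fourierCoeff (heatMultiplier s t) m = Lker s m t := by
  refine fourierCoeff_eq_integral_mul_cos (heatMultiplier_coe s t) (fun θ => ?_) ?_ m
  · rw [neg_div, Real.sin_neg, neg_sq]
  · refine Continuous.intervalIntegrable ?_ _ _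
    exact Real.continuous_exp.comp <| continuous_const.mul <|
      (by fun_prop : Continuous fun θ : ℝ => 4 * Real.sin (θ / 2) ^ 2).rpow_const fun _ => Or.inr hs

theorem Lker_chapman_kolmogorov_general (s t τ : ℝ) (hs0 : 0 < s) (n : ℤ) :
    (Summable fun k : ℤ => |Lker s (n - k) t * Lker s k τ|) ∧
    (∑' k : ℤ, Lker s (n - k) t * Lker s k τ) = Lker s n (t + τ) := by
  have h := hasSum_fourierCoeff_mul ⟨_, continuous_heatMultiplier s t hs0.le⟩
    ⟨_, continuous_heatMultiplier s τ hs0.le⟩ n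
  simp only [ContinuousMap.coe_mul, ContinuousMap.coe_mk, heatMultiplier_mul,
    fourierCoeff_heatMultiplier s _ hs0.le] at h
  have hR : HasSum (fun k => Lker s (n - k) t * Lker s k τ) (Lker s n (t + τ)) := by
    exact_mod_cast h
  exact ⟨hR.summable.abs, hR.tsum_eq⟩

/-- The Chapman–Kolmogorov (semigroup) property of the kernels `L^s`. -/
theorem Lker_chapman_kolmogorov (s t τ : ℝ) (hs0 : 0 < s) (hs1 : s < 1)
    (ht : 0 ≤ t) (hτ : 0 ≤ τ) (n : ℤ) :
    (Summable fun k : ℤ => |Lker s (n - k) t * Lker s k τ|) ∧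
    (∑' k : ℤ, Lker s (n - k) t * Lker s k τ) = Lker s n (t + τ) :=
  Lker_chapman_kolmogorov_general s t τ hs0 n
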